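/- arXiv:2308.12109 — 5 statements merged into one kernel-verified Lean document; each statement's English description precedes it below -/
import Mathlib

section
/- Let G be a connected finite vertex-transitive graph and let X, Y ⊆ V(G) be subsets with Y obtained from X by a single swap: X = Z ∪ {u}, Y = Z ∪ {v} with u ∉ Z, v ∉ Z, u ≠ v, Z = X ∩ Y. Then σ_X − σ_{X̄} = σ_Y − σ_{Ȳ}, where σ_S(t) = (1/2) Σ_{(a,b) ∈ S²} t^{d(a,b)} and S̄ denotes the complement of S in V(G). -/
open Finset

/-- A graph is vertex-transitive if its automorphism group acts transitively
on the vertices. -/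
def VertexTransitive {V : Type*} (G : SimpleGraph V) : Prop :=
  ∀ u v : V, ∃ φ : G ≃g G, φ u = v

/-- Twice the auto-correlation function of `S`: the number of ordered pairs of
vertices of `S` at path-distance `k` (so `σ_S(t) = (1/2) Σ_k pairCount k · t^k`). -/
noncomputable def pairCount {V : Type*} (G : SimpleGraph V) (S : Finset V) (k : ℕ) : ℕ :=
  ((S ×ˢ S).filter fun p => G.dist p.1 p.2 = k).card

section Aux

variable {V : Type*} (G : SimpleGraph V)

lemma dist_iso_le (h : G.Connected) (φ : G ≃g G) (a b : V) :
    G.dist (φ a) (φ b) ≤ G.dist a b := by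
  obtain ⟨p, hp⟩ := (h a b).exists_walk_length_eq_dist
  calc G.dist (φ a) (φ b) ≤ (p.map φ.toHom).length := SimpleGraph.dist_le _
    _ = p.length := p.length_map _
    _ = G.dist a b := hp

lemma dist_iso (h : G.Connected) (φ : G ≃g G) (a b : V) :
    G.dist (φ a) (φ b) = G.dist a b := by
  refine le_antisymm (dist_iso_le G h φ a b) ?_
  have := dist_iso_le G h φ.symm (φ a) (φ b)
  simpa using this

variable [Fintype V] [DecidableEq V]

/-- number of vertices of `S` at distance `k` from `a`. -/
noncomputable def nb (a : V) (S : Finset V) (k : ℕ) : ℕ :=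
  (S.filter fun b => G.dist a b = k).card

lemma sphere_card_eq (h : G.Connected) (htrans : VertexTransitive G) (a b : V) (k : ℕ) :
    nb G a univ k = nb G b univ k := by
  obtain ⟨φ, hφ⟩ := htrans a b
  unfold nb
  apply Finset.card_equiv φ.toEquiv
  intro w
  simp [← hφ, dist_iso G h φ]

lemma pairCount_eq_sum (S : Finset V) (k : ℕ) :
    pairCount G S k = ∑ a ∈ S, nb G a S k := by
  unfold pairCount nb
  rw [Finset.card_filter, Finset.sum_product]
  exact Finset.sum_congr rfl fun a _ => (Finset.card_filter _ _).symm

lemma nb_insert (a : V) (x : V) (S : Finset V) (hx : x ∉ S) (k : ℕ) :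
    nb G a (insert x S) k = nb G a S k + (if G.dist a x = k then 1 else 0) := by
  unfold nb
  rw [Finset.filter_insert]
  split <;> simp [Finset.card_insert_of_notMem, hx, Finset.mem_filter]

lemma pairCount_insert (x : V) (S : Finset V) (hx : x ∉ S) (k : ℕ) :
    pairCount G (insert x S) k
      = pairCount G S k + 2 * nb G x S k + (if k = 0 then 1 else 0) := by
  rw [pairCount_eq_sum, pairCount_eq_sum, Finset.sum_insert hx]
  have h1 : nb G x (insert x S) k = nb G x S k + (if k = 0 then 1 else 0) := by
    rw [nb_insert G x x S hx k, SimpleGraph.dist_self]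
    congr 1
    simp [eq_comm]
  have h2 : ∑ a ∈ S, nb G a (insert x S) k
      = ∑ a ∈ S, nb G a S k + ∑ a ∈ S, (if G.dist a x = k then 1 else 0) := by
    rw [← Finset.sum_add_distrib]
    exact Finset.sum_congr rfl fun a _ => nb_insert G a x S hx k
  have h3 : ∑ a ∈ S, (if G.dist a x = k then 1 else 0) = nb G x S k := by
    unfold nb
    rw [Finset.card_filter]
    exact Finset.sum_congr rfl fun a _ => by rw [SimpleGraph.dist_comm]
  rw [h1, h2, h3]
  ring

end Aux

/-- Swapping invariance: if `Y` is obtained from `X` by a single swap of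
`u ∈ X` for `v ∉ X`, then `σ_X − σ_{X̄} = σ_Y − σ_{Ȳ}` (coefficientwise; the
factor 1/2 is cleared). -/
theorem swap_invariance
    {V : Type*} [Fintype V] [DecidableEq V] (G : SimpleGraph V)
    (hconn : G.Connected) (htrans : VertexTransitive G)
    (X Y Z : Finset V) (u v : V)
    (hu : u ∉ Z) (hv : v ∉ Z) (huv : u ≠ v)
    (hX : X = insert u Z) (hY : Y = insert v Z) (hZ : Z = X ∩ Y) :
    ∀ k : ℕ,
      (pairCount G X k : ℤ) - pairCount G Xᶜ k =
        (pairCount G Y k : ℤ) - pairCount G Yᶜ k := by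
  intro k
  set W : Finset V := (insert u (insert v Z))ᶜ with hW
  have huW : u ∉ W := by simp [hW]
  have hvW : v ∉ W := by simp [hW]
  have hXc : Xᶜ = insert v W := by
    ext w
    by_cases hwv : w = v <;>
      simp [hX, hW, hwv, huv.symm, hv, Finset.mem_insert, and_comm]
  have hYc : Yᶜ = insert u W := by
    ext w
    by_cases hwu : w = u <;>
      simp [hY, hW, hwu, huv, hu, Finset.mem_insert]
  have kX := pairCount_insert G u Z hu k
  have kY := pairCount_insert G v Z hv k
  have kXc := pairCount_insert G v W hvW k
  have kYc := pairCount_insert G u W huW k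
  rw [hXc, hYc, hX, hY, kX, kY, kXc, kYc]
  -- reduce to: nb u Z + nb u W = nb v Z + nb v W
  have key : nb G u Z k + nb G u W k = nb G v Z k + nb G v W k := by
    have hsplit : ∀ a : V, nb G a Z k + nb G a W k
        = nb G a univ k - (if G.dist a u = k then 1 else 0)
            - (if G.dist a v = k then 1 else 0) := by
      intro a
      have huniv : (univ : Finset V) = insert u (insert v (Z ∪ W)) := by
        ext w
        by_cases hwu : w = u
        · simp [hwu]
        by_cases hwv : w = v
        · simp [hwv]
        simp [hW, hwu, hwv, Finset.mem_insert]
        tauto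
      have hZW : Z ∩ W = ∅ := by
        ext w; simp [hW, Finset.mem_insert]; tauto
      have hnbU : nb G a (Z ∪ W) k = nb G a Z k + nb G a W k := by
        unfold nb
        rw [Finset.filter_union, Finset.card_union_of_disjoint
          (Finset.disjoint_filter_filter (Finset.disjoint_iff_inter_eq_empty.mpr hZW))]
      have huZW : u ∉ insert v (Z ∪ W) := by
        simp [hW, hu, huv]
      have hvZW : v ∉ Z ∪ W := by simp [hv, hvW]
      rw [huniv, nb_insert G a u _ huZW, nb_insert G a v _ hvZW, hnbU]
      omega
    have h1 := hsplit u
    have h2 := hsplit v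
    have hsph := sphere_card_eq G hconn htrans u v k
    have hduv : G.dist u v = G.dist v u := SimpleGraph.dist_comm ..
    have hdu : G.dist u u = G.dist v v := by rw [SimpleGraph.dist_self, SimpleGraph.dist_self]
    -- need nb a univ ≥ the subtracted indicators : derive positivity
    have hle : ∀ a b : V, G.dist a b = k → 1 ≤ nb G a univ k := fun a b h =>
      Finset.card_pos.mpr ⟨b, by simp [nb, h]⟩
    have hle2 : ∀ a b c : V, b ≠ c →
        (if G.dist a b = k then 1 else 0) + (if G.dist a c = k then 1 else 0)
          ≤ nb G a univ k := by
      intro a b c hbc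
      by_cases h1 : G.dist a b = k <;> by_cases h2 : G.dist a c = k
      · rw [if_pos h1, if_pos h2]
        have hsub : {b, c} ⊆ univ.filter fun w => G.dist a w = k := by
          intro w hw
          simp only [Finset.mem_insert, Finset.mem_singleton] at hw
          rcases hw with rfl | rfl <;> simp [h1, h2]
        calc 1 + 1 = ({b, c} : Finset V).card := by
              rw [Finset.card_insert_of_notMem (by simp [hbc]), Finset.card_singleton]
          _ ≤ _ := Finset.card_le_card hsub
      · rw [if_pos h1, if_neg h2]; simpa using hle a b h1
      · rw [if_neg h1, if_pos h2]; simpa using hle a c h2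
      · simp [h1, h2]
    have hu2 := hle2 u u v huv
    have hv2 := hle2 v u v huv
    have e1 : (if G.dist u u = k then 1 else 0) = (if G.dist v v = k then 1 else 0) := by
      rw [hdu]
    have e2 : (if G.dist u v = k then 1 else 0) = (if G.dist v u = k then 1 else 0) := by
      rw [hduv]
    omega
  push_cast
  omega
end

section
/- Let G be a connected finite vertex-transitive graph and X, Y ⊆ V(G) finite subsets of the same cardinality. Then σ_X − σ_{X̄} = σ_Y − σ_{Ȳ}. -/
open Finset

lemma iso_dist {V : Type*} (G : SimpleGraph V) (hconn : G.Connected) (φ : G ≃g G)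
    (a b : V) : G.dist (φ a) (φ b) = G.dist a b := by
  have key : ∀ (ψ : G ≃g G) (x y : V), G.dist (ψ x) (ψ y) ≤ G.dist x y := by
    intro ψ x y
    obtain ⟨p, hp⟩ := hconn.exists_walk_length_eq_dist x y
    calc G.dist (ψ x) (ψ y) ≤ (p.map ψ.toHom).length := SimpleGraph.dist_le _
      _ = G.dist x y := by rw [SimpleGraph.Walk.length_map, hp]
  refine le_antisymm (key φ a b) ?_
  have := key φ.symm (φ a) (φ b)
  simpa using this

open Classical in
noncomputable def sphCard {V : Type*} [Fintype V] (G : SimpleGraph V) (a : V) (k : ℕ) : ℕ :=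
  (univ.filter fun b => G.dist a b = k).card

lemma sph_const {V : Type*} [Fintype V] (G : SimpleGraph V) (hconn : G.Connected)
    (htrans : VertexTransitive G) (u v : V) (k : ℕ) : sphCard G u k = sphCard G v k := by
  classical
  obtain ⟨φ, hφ⟩ := htrans u v
  unfold sphCard
  apply Finset.card_bij (fun b _ => φ b)
  · intro b hb
    simp only [mem_filter, mem_univ, true_and] at hb ⊢
    rw [← hφ, iso_dist G hconn, hb]
  · intro a _ b _ h
    exact φ.toEquiv.injective h
  · intro b hb
    refine ⟨φ.symm b, ?_, by simp⟩
    simp only [mem_filter, mem_univ, true_and] at hb ⊢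
    rw [← iso_dist G hconn φ, hφ]; simpa using hb

lemma pairCount_eq_sum_s2 {V : Type*} [Fintype V] [DecidableEq V] (G : SimpleGraph V)
    (S : Finset V) (k : ℕ) :
    pairCount G S k = ∑ a ∈ S, (S.filter fun b => G.dist a b = k).card := by
  classical
  unfold pairCount
  rw [Finset.card_filter, Finset.sum_product]
  congr 1; ext a
  rw [Finset.card_filter]

lemma split_sph {V : Type*} [Fintype V] [DecidableEq V] (G : SimpleGraph V)
    (S : Finset V) (a : V) (k : ℕ) :
    (S.filter fun b => G.dist a b = k).card + (Sᶜ.filter fun b => G.dist a b = k).card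
      = sphCard G a k := by
  classical
  unfold sphCard
  rw [← Finset.card_union_of_disjoint
      (Finset.disjoint_filter_filter disjoint_compl_right),
    ← Finset.filter_union, Finset.union_compl]

lemma cross_symm {V : Type*} [Fintype V] [DecidableEq V] (G : SimpleGraph V)
    (S : Finset V) (k : ℕ) :
    ∑ a ∈ S, (Sᶜ.filter fun b => G.dist a b = k).card
      = ∑ a ∈ Sᶜ, (S.filter fun b => G.dist a b = k).card := by
  classical
  simp only [Finset.card_filter]
  rw [Finset.sum_comm]
  congr 1; ext a; congr 1; ext b
  rw [SimpleGraph.dist_comm]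

lemma key_formula {V : Type*} [Fintype V] [DecidableEq V] (G : SimpleGraph V)
    (hconn : G.Connected) (htrans : VertexTransitive G) (v₀ : V) (S : Finset V) (k : ℕ) :
    (pairCount G S k : ℤ) - pairCount G Sᶜ k
      = ((S.card : ℤ) - Sᶜ.card) * sphCard G v₀ k := by
  classical
  have hs : ∀ a : V, sphCard G a k = sphCard G v₀ k :=
    fun a => sph_const G hconn htrans a v₀ k
  have h1 : (pairCount G S k : ℤ) + ∑ a ∈ S, ((Sᶜ.filter fun b => G.dist a b = k).card : ℤ)
      = S.card * sphCard G v₀ k := by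
    rw [pairCount_eq_sum_s2]
    push_cast
    rw [← Finset.sum_add_distrib]
    have : ∀ a ∈ S, ((S.filter fun b => G.dist a b = k).card : ℤ)
        + (Sᶜ.filter fun b => G.dist a b = k).card = sphCard G v₀ k := by
      intro a _
      rw [← hs a, ← split_sph G S a k]; push_cast; ring
    rw [Finset.sum_congr rfl this, Finset.sum_const, nsmul_eq_mul]
  have h2 : (pairCount G Sᶜ k : ℤ) + ∑ a ∈ Sᶜ, ((S.filter fun b => G.dist a b = k).card : ℤ)
      = Sᶜ.card * sphCard G v₀ k := by
    rw [pairCount_eq_sum_s2]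
    push_cast
    rw [← Finset.sum_add_distrib]
    have : ∀ a ∈ Sᶜ, ((Sᶜ.filter fun b => G.dist a b = k).card : ℤ)
        + (S.filter fun b => G.dist a b = k).card = sphCard G v₀ k := by
      intro a _
      rw [← hs a, ← split_sph G S a k]; push_cast; ring
    rw [Finset.sum_congr rfl this, Finset.sum_const, nsmul_eq_mul]
  have h3 : ∑ a ∈ S, ((Sᶜ.filter fun b => G.dist a b = k).card : ℤ)
      = ∑ a ∈ Sᶜ, ((S.filter fun b => G.dist a b = k).card : ℤ) := by
    exact_mod_cast congrArg (Nat.cast : ℕ → ℤ) (cross_symm G S k)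
  linarith [h1, h2, h3]

/-- For any two equicardinal subsets `X, Y` of a connected finite
vertex-transitive graph, `σ_X − σ_{X̄} = σ_Y − σ_{Ȳ}`. -/
theorem difference_invariant
    {V : Type*} [Fintype V] [DecidableEq V] (G : SimpleGraph V)
    (hconn : G.Connected) (htrans : VertexTransitive G)
    (X Y : Finset V) (hcard : X.card = Y.card) :
    ∀ k : ℕ,
      (pairCount G X k : ℤ) - pairCount G Xᶜ k =
        (pairCount G Y k : ℤ) - pairCount G Yᶜ k := by
  intro k
  have hV : Nonempty V := hconn.nonempty
  obtain ⟨v₀⟩ := hV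
  rw [key_formula G hconn htrans v₀ X k, key_formula G hconn htrans v₀ Y k,
    Finset.card_compl, Finset.card_compl, hcard]
end

section
/- The six-point sets X = {0,1,4,10,12,17} and Y = {0,1,8,11,13,17} in Z have the same multiset of pairwise distances (they are homometric), but there is no isometry of Z (translation, or translation composed with negation) mapping X onto Y. -/
open Finset

/-- The multiset of pairwise distances `|x − y|` over pairs `x < y` of a finite
subset of `ℤ`. -/
def distMultiset (S : Finset ℤ) : Multiset ℕ :=
  ((S ×ˢ S).filter fun p => p.1 < p.2).val.map fun p => (p.2 - p.1).natAbs

/-- Bloom's counterexample to Piccard's theorem: the sets `{0,1,4,10,12,17}`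
and `{0,1,8,11,13,17}` are homometric but no isometry of `ℤ` maps one onto
the other. -/
theorem bloom_pair_homometric_not_congruent :
    distMultiset ({0, 1, 4, 10, 12, 17} : Finset ℤ) =
      distMultiset ({0, 1, 8, 11, 13, 17} : Finset ℤ) ∧
    ¬ ∃ c : ℤ,
      (({0, 1, 4, 10, 12, 17} : Finset ℤ).image (fun x => x + c) =
          ({0, 1, 8, 11, 13, 17} : Finset ℤ) ∨
        (({0, 1, 4, 10, 12, 17} : Finset ℤ).image (fun x => -x + c) =
          ({0, 1, 8, 11, 13, 17} : Finset ℤ))) := by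
  constructor
  · decide
  · rintro ⟨c, h | h⟩
    · have h0 : (0:ℤ) + c ∈ ({0, 1, 8, 11, 13, 17} : Finset ℤ) := by
        rw [← h]; exact mem_image_of_mem _ (by decide)
      simp only [zero_add, mem_insert, mem_singleton] at h0
      rcases h0 with rfl | rfl | rfl | rfl | rfl | rfl <;> exact absurd h (by decide)
    · have h0 : -(0:ℤ) + c ∈ ({0, 1, 8, 11, 13, 17} : Finset ℤ) := by
        rw [← h]; exact mem_image_of_mem _ (by decide)
      simp only [neg_zero, zero_add, mem_insert, mem_singleton] at h0
      rcases h0 with rfl | rfl | rfl | rfl | rfl | rfl <;> exact absurd h (by decide)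
end

section
/- For every k ≥ 12, the sets X_k = {0, 1, 5} ∪ {6, 7, 9, 10, ..., k−4, k−3} ∪ {k} and Y_k = {0, 4, 5} ∪ {6, 9, 10, ..., k−4, k−3} ∪ {k−1, k} (as defined in the recursive family X_{k+1} = (X_k \ {k}) ∪ {k−2, k+1}, Y_{k+1} = (Y_k \ {k−1}) ∪ {k−2, k+1}, starting from homometric X₁₂, Y₁₂) are homometric: the multisets of pairwise distances of X_k and Y_k coincide. -/
/-!
Induction on `k` from `k = 12`, which is checked by computation. Let `C`, `C'` be the parts of
`X_k`, `Y_k` below `k - 2`, so that `X_k = C ∪ {k}`, `Y_k = C' ∪ {k-1, k}`,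
`X_{k+1} = C ∪ {k-2, k+1}` and `Y_{k+1} = C' ∪ {k-2, k, k+1}`. Comparing the distances each step
adds and removes, homometry passes from `k` to `k + 1` once the distances from `k-1` to `C'` and
from `k-2, k+1` to `C` agree with those from `k-2, k+1` to `C'` and from `k` to `C`, up to one
extra distance `2`. On the common interval `{9,…,k-3}` the distances to `k-1` and to `k` differ
only in `k-9` against `2`; the leftover `k-9` is absorbed by a fixed identity between the
distances from `k-1, k-2, k+1, k` to `{0,1,5,6,7}` and `{0,4,5,6}`.
-/

open Finset

/-- The set `X_k = {0,1,5,6,7} ∪ {9,…,k−3} ∪ {k}`. -/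
noncomputable def Xfam (k : ℤ) : Finset ℤ := ({0, 1, 5, 6, 7} : Finset ℤ) ∪ Finset.Icc 9 (k - 3) ∪ {k}

/-- The set `Y_k = {0,4,5,6} ∪ {9,…,k−3} ∪ {k−1,k}`. -/
noncomputable def Yfam (k : ℤ) : Finset ℤ := ({0, 4, 5, 6} : Finset ℤ) ∪ Finset.Icc 9 (k - 3) ∪ {k - 1, k}

def distFrom (a : ℤ) (S : Finset ℤ) : Multiset ℕ := ∑ x ∈ S, {(a - x).natAbs}

theorem distMultiset_eq_sum (S : Finset ℤ) :
    distMultiset S = ∑ x ∈ S, ∑ y ∈ S, if x < y then {(y - x).natAbs} else 0 := by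
  rw [distMultiset, ← Multiset.sum_map_singleton (Multiset.map _ _), Multiset.map_map,
    ← sum_eq_multiset_sum, sum_filter, sum_product]
  rfl

theorem distMultiset_insert {a : ℤ} {S : Finset ℤ} (ha : a ∉ S) :
    distMultiset (insert a S) = distMultiset S + distFrom a S := by
  have cross : ∑ y ∈ S, (if a < y then {(y - a).natAbs} else 0) +
      ∑ x ∈ S, (if x < a then {(a - x).natAbs} else 0) = distFrom a S := by
    rw [distFrom, ← sum_add_distrib]
    refine sum_congr rfl fun x hx => ?_
    rcases (ne_of_mem_of_not_mem hx ha).lt_or_gt with h | h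
    · simp [h, h.not_gt]
    · simp [h, h.not_gt, ← Int.natAbs_neg (x - a)]
  simp only [distMultiset_eq_sum, sum_insert ha, lt_irrefl, if_false, zero_add, sum_add_distrib]
  rw [← cross]
  abel

theorem distFrom_insert {a b : ℤ} {S : Finset ℤ} (hb : b ∉ S) :
    distFrom a (insert b S) = {(a - b).natAbs} + distFrom a S :=
  sum_insert hb

theorem distFrom_union {a : ℤ} {S T : Finset ℤ} (h : Disjoint S T) :
    distFrom a (S ∪ T) = distFrom a S + distFrom a T :=
  sum_union h

theorem distFrom_add_map_addRightEmbedding (a c : ℤ) (S : Finset ℤ) :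
    distFrom (a + c) (S.map (addRightEmbedding c)) = distFrom a S := by
  simp [distFrom, sum_map]

theorem distFrom_Icc_add_one (a : ℤ) {lo hi : ℤ} (h : lo ≤ hi + 1) :
    distFrom a (Icc lo hi) + {(a - (lo - 1)).natAbs} =
      distFrom (a + 1) (Icc lo hi) + {(a - hi).natAbs} := by
  have extend_left : Icc (lo - 1) hi = insert (lo - 1) (Icc lo hi) := by
    ext x; simp only [mem_Icc, mem_insert]; omega
  have extend_right : Icc (lo - 1) hi = insert hi (Icc (lo - 1) (hi - 1)) := by
    ext x; simp only [mem_Icc, mem_insert]; omega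
  have shift : Icc lo hi = (Icc (lo - 1) (hi - 1)).map (addRightEmbedding 1) := by
    simp [map_add_right_Icc]
  calc distFrom a (Icc lo hi) + {(a - (lo - 1)).natAbs}
      = distFrom a (Icc (lo - 1) hi) := by
        rw [extend_left, distFrom_insert (by simp), add_comm]
    _ = distFrom a (Icc (lo - 1) (hi - 1)) + {(a - hi).natAbs} := by
        rw [extend_right, distFrom_insert (by simp), add_comm]
    _ = distFrom (a + 1) (Icc lo hi) + {(a - hi).natAbs} := by
        rw [shift, distFrom_add_map_addRightEmbedding]

theorem distMultiset_insert_insert {a b : ℤ} {S : Finset ℤ} (hb : b ∉ S) (ha : a ∉ insert b S) :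
    distMultiset (insert a (insert b S)) =
      distMultiset S + distFrom b S + ({(a - b).natAbs} + distFrom a S) := by
  rw [distMultiset_insert ha, distMultiset_insert hb, distFrom_insert hb]

theorem distMultiset_step {k : ℤ} {C C' : Finset ℤ}
    (hC : ∀ x ∈ C, x < k - 2) (hC' : ∀ x ∈ C', x < k - 2)
    (balance : distFrom (k - 1) C' + distFrom (k - 2) C + distFrom (k + 1) C =
      distFrom (k - 2) C' + distFrom (k + 1) C' + distFrom k C + {2})
    (h : distMultiset (insert k C) = distMultiset (insert k (insert (k - 1) C'))) :
    distMultiset (insert (k + 1) (insert (k - 2) C)) =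
      distMultiset (insert (k + 1) (insert k (insert (k - 2) C'))) := by
  rw [distMultiset_insert (by grind), distMultiset_insert_insert (by grind) (by grind),
    show (k - (k - 1)).natAbs = 1 by omega] at h
  rw [distMultiset_insert_insert (by grind) (by grind), distMultiset_insert (by grind),
    distMultiset_insert_insert (by grind) (by grind), distFrom_insert (by grind),
    distFrom_insert (by grind), show (k - (k - 2)).natAbs = 2 by omega,
    show (k + 1 - k).natAbs = 1 by omega, show (k + 1 - (k - 2)).natAbs = 3 by omega]
  apply add_right_cancel (b := distFrom k C)
  calc distMultiset C + distFrom (k - 2) C + ({3} + distFrom (k + 1) C) + distFrom k C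
      = (distMultiset C + distFrom k C) + (distFrom (k - 2) C + distFrom (k + 1) C + {3}) := by
        abel
    _ = (distMultiset C' + distFrom (k - 1) C' + ({1} + distFrom k C')) +
          (distFrom (k - 2) C + distFrom (k + 1) C + {3}) := by rw [h]
    _ = distMultiset C' + distFrom k C' + {1} + {3} +
          (distFrom (k - 1) C' + distFrom (k - 2) C + distFrom (k + 1) C) := by abel
    _ = _ := by rw [balance]; abel

theorem distFrom_heads_balance (k : ℤ) :
    distFrom (k - 1) {0, 4, 5, 6} + distFrom (k - 2) {0, 1, 5, 6, 7} +
        distFrom (k + 1) {0, 1, 5, 6, 7} =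
      distFrom (k - 2) {0, 4, 5, 6} + distFrom (k + 1) {0, 4, 5, 6} +
        distFrom k {0, 1, 5, 6, 7} + {(k - 9).natAbs} := by
  norm_num [distFrom, sum_insert]
  simp only [← Multiset.singleton_add]
  ring_nf
  abel

noncomputable def Xcore (k : ℤ) : Finset ℤ := {0, 1, 5, 6, 7} ∪ Icc 9 (k - 3)

noncomputable def Ycore (k : ℤ) : Finset ℤ := {0, 4, 5, 6} ∪ Icc 9 (k - 3)

theorem Xfam_eq_insert (k : ℤ) : Xfam k = insert k (Xcore k) := by
  ext x; simp only [Xfam, Xcore, mem_union, mem_insert, mem_singleton]; tauto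

theorem Yfam_eq_insert (k : ℤ) : Yfam k = insert k (insert (k - 1) (Ycore k)) := by
  ext x; simp only [Yfam, Ycore, mem_union, mem_insert, mem_singleton]; tauto

theorem Xfam_add_one {k : ℤ} (hk : 11 ≤ k) :
    Xfam (k + 1) = insert (k + 1) (insert (k - 2) (Xcore k)) := by
  ext x; simp only [Xfam, Xcore, mem_union, mem_insert, mem_singleton, mem_Icc]; omega

theorem Yfam_add_one {k : ℤ} (hk : 11 ≤ k) :
    Yfam (k + 1) = insert (k + 1) (insert k (insert (k - 2) (Ycore k))) := by
  ext x; simp only [Yfam, Ycore, mem_union, mem_insert, mem_singleton, mem_Icc]; omega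

theorem lt_of_mem_Xcore {k x : ℤ} (hk : 10 ≤ k) (hx : x ∈ Xcore k) : x < k - 2 := by
  simp only [Xcore, mem_union, mem_insert, mem_singleton, mem_Icc] at hx
  omega

theorem lt_of_mem_Ycore {k x : ℤ} (hk : 9 ≤ k) (hx : x ∈ Ycore k) : x < k - 2 := by
  simp only [Ycore, mem_union, mem_insert, mem_singleton, mem_Icc] at hx
  omega

theorem distFrom_cores_balance {k : ℤ} (hk : 11 ≤ k) :
    distFrom (k - 1) (Ycore k) + distFrom (k - 2) (Xcore k) + distFrom (k + 1) (Xcore k) =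
      distFrom (k - 2) (Ycore k) + distFrom (k + 1) (Ycore k) + distFrom k (Xcore k) + {2} := by
  have disjoint_of_lt {H : Finset ℤ} (hH : ∀ x ∈ H, x < 9) : Disjoint H (Icc 9 (k - 3)) :=
    disjoint_left.2 fun x hxH hxI => (hH x hxH).not_ge (mem_Icc.1 hxI).1
  have hX : Disjoint ({0, 1, 5, 6, 7} : Finset ℤ) (Icc 9 (k - 3)) := disjoint_of_lt (by simp)
  have hY : Disjoint ({0, 4, 5, 6} : Finset ℤ) (Icc 9 (k - 3)) := disjoint_of_lt (by simp)
  have interval := distFrom_Icc_add_one (k - 1) (lo := 9) (hi := k - 3) (by omega)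
  rw [sub_add_cancel, show k - 1 - (9 - 1) = k - 9 by ring,
    show (k - 1 - (k - 3)).natAbs = 2 by omega] at interval
  apply add_right_cancel (b := ({(k - 9).natAbs} : Multiset ℕ))
  simp only [Xcore, Ycore, distFrom_union hX, distFrom_union hY]
  calc _ = (distFrom (k - 1) {0, 4, 5, 6} + distFrom (k - 2) {0, 1, 5, 6, 7} +
          distFrom (k + 1) {0, 1, 5, 6, 7}) + (distFrom (k - 1) (Icc 9 (k - 3)) + {(k - 9).natAbs}) +
          (distFrom (k - 2) (Icc 9 (k - 3)) + distFrom (k + 1) (Icc 9 (k - 3))) := by abel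
    _ = _ := by rw [distFrom_heads_balance, interval]; abel

/-- For every `k ≥ 12`, the `(k−5)`-point configurations `X_k` and `Y_k` are
homometric: their multisets of pairwise distances coincide. -/
theorem recursive_family_homometric (k : ℤ) (hk : 12 ≤ k) :
    distMultiset (Xfam k) = distMultiset (Yfam k) := by
  induction k, hk using Int.leInduction with
  | base => decide
  | succ k hk ih =>
    rw [Xfam_eq_insert, Yfam_eq_insert] at ih
    rw [Xfam_add_one (by omega), Yfam_add_one (by omega)]
    exact distMultiset_step (fun x => lt_of_mem_Xcore (by omega))
      (fun x => lt_of_mem_Ycore (by omega)) (distFrom_cores_balance (by omega)) ih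
end

section
/- Let X₀ ⊂ (−1/2, 1/2) be finite with min(X₀) + max(X₀) = 0, asymmetric (X₀ ≠ −X₀), and let X ⊂ Z be finite with at least two elements. Then X₀ ⊕ X ≠ (−X₀) ⊕ X; in fact no translation x ↦ x + c maps X₀ ⊕ X onto (−X₀) ⊕ X. -/
open Finset

/-- The Minkowski sum `X₀ ⊕ X` of a finite set of reals and a finite set of
integers. -/
noncomputable def minkSum (X₀ : Finset ℝ) (X : Finset ℤ) : Finset ℝ :=
  (X₀ ×ˢ X).image fun p => p.1 + (p.2 : ℝ)

lemma mem_minkSum {X₀ : Finset ℝ} {X : Finset ℤ} {x : ℝ} :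
    x ∈ minkSum X₀ X ↔ ∃ a ∈ X₀, ∃ n ∈ X, a + (n : ℝ) = x := by
  simp [minkSum, Finset.mem_image, Finset.mem_product]
  aesop

lemma minkSum_nonempty {X₀ : Finset ℝ} {X : Finset ℤ}
    (h₀ : X₀.Nonempty) (hX : X.Nonempty) : (minkSum X₀ X).Nonempty := by
  obtain ⟨a, ha⟩ := h₀; obtain ⟨n, hn⟩ := hX
  exact ⟨a + n, mem_minkSum.2 ⟨a, ha, n, hn, rfl⟩⟩

lemma minkSum_min' {X₀ : Finset ℝ} {X : Finset ℤ}
    (h₀ : X₀.Nonempty) (hX : X.Nonempty) :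
    (minkSum X₀ X).min' (minkSum_nonempty h₀ hX)
      = X₀.min' h₀ + (X.min' hX : ℝ) := by
  apply le_antisymm
  · exact Finset.min'_le _ _ (mem_minkSum.2 ⟨_, X₀.min'_mem h₀, _, X.min'_mem hX, rfl⟩)
  · apply Finset.le_min'
    intro y hy
    obtain ⟨a, ha, n, hn, rfl⟩ := mem_minkSum.1 hy
    have h1 := X₀.min'_le a ha
    have h2 := X.min'_le n hn
    have : (X.min' hX : ℝ) ≤ (n : ℝ) := by exact_mod_cast h2
    linarith

lemma neg_image_min' {X₀ : Finset ℝ} (h₀ : X₀.Nonempty) :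
    (X₀.image (fun a => -a)).min' (h₀.image _) = -(X₀.max' h₀) := by
  apply le_antisymm
  · exact Finset.min'_le _ _ (Finset.mem_image_of_mem _ (X₀.max'_mem h₀))
  · apply Finset.le_min'
    intro y hy
    obtain ⟨a, ha, rfl⟩ := Finset.mem_image.1 hy
    simpa using X₀.le_max' a ha

/-- The slice of the Minkowski sum below `min X + 1/2` is exactly `X₀ + min X`. -/
lemma minkSum_slice {X₀ : Finset ℝ} {X : Finset ℤ}
    (hball : ∀ a ∈ X₀, -(1 / 2 : ℝ) < a ∧ a < 1 / 2) (hX : X.Nonempty) :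
    (minkSum X₀ X).filter (fun x => x < (X.min' hX : ℝ) + 1 / 2)
      = X₀.image (fun a => a + (X.min' hX : ℝ)) := by
  ext x
  simp only [Finset.mem_filter, Finset.mem_image, mem_minkSum]
  constructor
  · rintro ⟨⟨a, ha, n, hn, rfl⟩, hlt⟩
    refine ⟨a, ha, ?_⟩
    have hmin := X.min'_le n hn
    have hcases : n = X.min' hX ∨ X.min' hX + 1 ≤ n := by omega
    rcases hcases with h | h
    · rw [h]
    · exfalso
      have : ((X.min' hX : ℤ) : ℝ) + 1 ≤ (n : ℝ) := by exact_mod_cast h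
      have := (hball a ha).1
      linarith
  · rintro ⟨a, ha, rfl⟩
    exact ⟨⟨a, ha, _, X.min'_mem hX, rfl⟩, by linarith [(hball a ha).2]⟩

/-- If `X₀ ⊂ (−1/2, 1/2)` satisfies `min X₀ + max X₀ = 0` and is asymmetric
(`X₀ ≠ −X₀`), and `X ⊂ ℤ` has at least two elements, then `X₀ ⊕ X` and
`(−X₀) ⊕ X` are distinct; in fact no translation maps one onto the other. -/
theorem minkowski_sums_not_congruent (X₀ : Finset ℝ) (X : Finset ℤ)
    (h₀ : X₀.Nonempty)
    (hball : ∀ a ∈ X₀, -(1 / 2 : ℝ) < a ∧ a < 1 / 2)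
    (hsym : X₀.min' h₀ + X₀.max' h₀ = 0)
    (hasym : X₀.image (fun a => -a) ≠ X₀)
    (hX : 2 ≤ X.card) :
    minkSum X₀ X ≠ minkSum (X₀.image (fun a => -a)) X ∧
    ∀ c : ℝ, (minkSum X₀ X).image (fun x => x + c) ≠
      minkSum (X₀.image (fun a => -a)) X := by
  have hXne : X.Nonempty := Finset.card_pos.1 (by omega)
  have hY₀ : (X₀.image (fun a => -a)).Nonempty := h₀.image _
  have hballY : ∀ a ∈ X₀.image (fun a => -a), -(1 / 2 : ℝ) < a ∧ a < 1 / 2 := by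
    intro a ha
    obtain ⟨b, hb, rfl⟩ := Finset.mem_image.1 ha
    have := hball b hb
    constructor <;> linarith [this.1, this.2]
  have key : ∀ c : ℝ, (minkSum X₀ X).image (fun x => x + c) ≠
      minkSum (X₀.image (fun a => -a)) X := by
    intro c heq
    -- min' comparison: c = 0
    have hne : ((minkSum X₀ X).image (fun x => x + c)).Nonempty :=
      (minkSum_nonempty h₀ hXne).image _
    have hmin1 : ((minkSum X₀ X).image (fun x => x + c)).min' hne
        = X₀.min' h₀ + (X.min' hXne : ℝ) + c := by
      rw [Finset.min'_image (f := fun x => x + c) (fun x y hxy => by simpa using hxy)]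
      rw [minkSum_min' h₀ hXne]
    have hmin2 : (minkSum (X₀.image (fun a => -a)) X).min' (minkSum_nonempty hY₀ hXne)
        = X₀.min' h₀ + (X.min' hXne : ℝ) := by
      rw [minkSum_min' hY₀ hXne, neg_image_min' h₀]
      have : -(X₀.max' h₀) = X₀.min' h₀ := by linarith
      rw [this]
    have hc : c = 0 := by
      have hm1 : X₀.min' h₀ + (X.min' hXne : ℝ) + c ∈ minkSum (X₀.image (fun a => -a)) X := by
        rw [← heq, ← hmin1]; exact Finset.min'_mem _ _
      have hm2 : X₀.min' h₀ + (X.min' hXne : ℝ) ∈ (minkSum X₀ X).image (fun x => x + c) := by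
        rw [heq, ← hmin2]; exact Finset.min'_mem _ _
      have h1 := Finset.min'_le _ _ hm1
      have h2 := Finset.min'_le _ _ hm2
      rw [hmin2] at h1
      rw [hmin1] at h2
      linarith
    subst hc
    have heq' : minkSum X₀ X = minkSum (X₀.image (fun a => -a)) X := by
      simpa using heq
    -- slice argument
    have hs : X₀.image (fun a => a + (X.min' hXne : ℝ))
        = (X₀.image (fun a => -a)).image (fun a => a + (X.min' hXne : ℝ)) := by
      rw [← minkSum_slice hball hXne, ← minkSum_slice hballY hXne, heq']
    have : X₀ = X₀.image (fun a => -a) := by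
      have hinj : Function.Injective (fun a : ℝ => a + (X.min' hXne : ℝ)) :=
        fun x y hxy => by simpa using hxy
      exact (Finset.image_injective hinj) hs
    exact hasym this.symm
  refine ⟨?_, key⟩
  intro h
  apply key 0
  simpa using h
end
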